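/- If G is a triangle-free finite simple graph, then all roots of the clique polynomial C(G,x) = 1 + n x + m x^2 (where n = |V(G)|, m = |E(G)|) are real. -/

import Mathlib

/-!
Triangle-freeness kills every coefficient of `C(G,x)` beyond the edges, so `C(G,x) = 1 + n x + m x²`.
Its discriminant `n² - 4m` is nonnegative by Mantel's theorem `4m ≤ n²`, the case `r = 2` of
Turán's bound `2rm ≤ (r - 1)n²` for `K_{r+1}`-free graphs; hence its roots are real.
-/

open scoped Classical
open Polynomial

/-- The number of `i`-cliques of a finite simple graph. -/
noncomputable def cliqueCount {V : Type*} [Fintype V] (G : SimpleGraph V) (i : ℕ) : ℕ :=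
  (G.cliqueFinset i).card

/-- The clique polynomial `C(G,x) = ∑ᵢ cᵢ(G) xⁱ` of a finite simple graph. -/
noncomputable def cliquePoly {V : Type*} [Fintype V] (G : SimpleGraph V) : Polynomial ℝ :=
  ∑ i ∈ Finset.range (Fintype.card V + 1), (cliqueCount G i : ℝ) • Polynomial.X ^ i

open Finset

namespace SimpleGraph

variable {V : Type*} [Fintype V]

theorem CliqueFree.two_mul_mul_card_edgeFinset_le {G : SimpleGraph V} [DecidableRel G.Adj]
    {r : ℕ} (cf : G.CliqueFree (r + 1)) :
    2 * r * #G.edgeFinset ≤ (r - 1) * Fintype.card V ^ 2 := by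
  rcases r.eq_zero_or_pos with rfl | hr
  · simp
  obtain ⟨H, _, maxH⟩ := exists_isTuranMaximal (V := V) hr
  obtain ⟨e⟩ := (isTuranMaximal_iff_nonempty_iso_turanGraph hr).mp maxH
  calc 2 * r * #G.edgeFinset ≤ 2 * r * #H.edgeFinset := Nat.mul_le_mul_left _ (maxH.2 cf)
    _ = 2 * r * #(turanGraph _ r).edgeFinset := by rw [e.card_edgeFinset_eq]
    _ ≤ _ := mul_card_edgeFinset_turanGraph_le

theorem CliqueFree.four_mul_card_edgeFinset_le {G : SimpleGraph V} [DecidableRel G.Adj]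
    (hG : G.CliqueFree 3) : 4 * #G.edgeFinset ≤ Fintype.card V ^ 2 := by
  simpa using hG.two_mul_mul_card_edgeFinset_le (r := 2)

variable [DecidableEq V] (G : SimpleGraph V) [DecidableRel G.Adj]

theorem card_cliqueFinset_zero : #(G.cliqueFinset 0) = 1 := by
  simp [cliqueFinset, filter_eq']

theorem card_cliqueFinset_one : #(G.cliqueFinset 1) = Fintype.card V := by
  rw [show G.cliqueFinset 1 = univ.map ⟨singleton, singleton_injective⟩ by ext; simp [eq_comm],
    card_map, card_univ]

theorem card_cliqueFinset_two : #(G.cliqueFinset 2) = #G.edgeFinset := by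
  symm
  refine card_bij (fun e _ ↦ e.toFinset) ?_ (fun e _ e' _ h ↦ Sym2.ext fun x ↦ by
    rw [← Sym2.mem_toFinset, h, Sym2.mem_toFinset]) ?_
  · intro e he
    induction e with
    | h a b =>
      have hab : G.Adj a b := by simpa using he
      simp [isNClique_iff, hab, hab.ne, Sym2.toFinset_mk_eq]
  · intro s hs
    obtain ⟨hclique, hcard⟩ := mem_cliqueFinset_iff.1 hs
    obtain ⟨a, b, hab, rfl⟩ := card_eq_two.1 hcard
    rw [coe_pair, isClique_pair] at hclique
    exact ⟨s(a, b), by simpa using hclique hab, Sym2.toFinset_mk_eq⟩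

end SimpleGraph

theorem coeff_cliquePoly {V : Type*} [Fintype V] (G : SimpleGraph V) (i : ℕ) :
    (cliquePoly G).coeff i = cliqueCount G i := by
  simp only [cliquePoly, finsetSum_coeff, coeff_smul, coeff_X_pow, smul_eq_mul, mul_ite, mul_one,
    mul_zero, sum_ite_eq, mem_range]
  split_ifs with hi
  · rfl
  · rw [eq_comm, Nat.cast_eq_zero, cliqueCount, card_eq_zero, SimpleGraph.cliqueFinset_eq_empty_iff]
    exact SimpleGraph.cliqueFree_of_card_lt (by omega)

theorem cliquePoly_eq_of_cliqueFree_three {V : Type*} [Fintype V] {G : SimpleGraph V}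
    (hG : G.CliqueFree 3) :
    cliquePoly G = 1 + (Fintype.card V : ℝ) • X + (#G.edgeFinset : ℝ) • X ^ 2 := by
  ext (_ | _ | _ | i) <;> simp only [coeff_cliquePoly, cliqueCount, coeff_add, coeff_one,
    coeff_smul, coeff_X, coeff_X_pow]
  · simp [G.card_cliqueFinset_zero]
  · simp [G.card_cliqueFinset_one]
  · simp [G.card_cliqueFinset_two]
  · simp [(hG.mono (by omega : 3 ≤ i + 3)).cliqueFinset]

theorem exists_ofReal_eq_of_quadratic_eq_zero {a b c : ℝ} (hc : c ≠ 0) (hd : 0 ≤ discrim a b c)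
    {z : ℂ} (hz : a * (z * z) + b * z + c = 0) : ∃ r : ℝ, z = r := by
  rcases eq_or_ne a 0 with rfl | ha
  · have hb : b ≠ 0 := by rintro rfl; simp_all
    refine ⟨-c / b, ?_⟩
    push_cast at hz ⊢
    rw [eq_div_iff (by exact_mod_cast hb)]
    linear_combination hz
  · have hs : discrim (a : ℂ) b c = √(discrim a b c) * √(discrim a b c) := by
      rw [← Complex.ofReal_mul, Real.mul_self_sqrt hd]; simp [discrim]
    rcases (quadratic_eq_zero_iff (by exact_mod_cast ha) hs z).1 hz with rfl | rfl
    · exact ⟨(-b + √(discrim a b c)) / (2 * a), by push_cast; rfl⟩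
    · exact ⟨(-b - √(discrim a b c)) / (2 * a), by push_cast; rfl⟩

/-- For a triangle-free graph, the clique polynomial `1 + n x + m x²` has only real roots. -/
theorem stmt_4 {V : Type*} [Fintype V] (G : SimpleGraph V) (hG : G.CliqueFree 3) :
    (cliquePoly G = 1 + (Fintype.card V : ℝ) • Polynomial.X
        + (G.edgeFinset.card : ℝ) • Polynomial.X ^ 2) ∧
      ∀ z : ℂ, Polynomial.aeval z (cliquePoly G) = 0 → ∃ r : ℝ, z = (r : ℂ) := by
  have hpoly := cliquePoly_eq_of_cliqueFree_three hG
  refine ⟨hpoly, fun z hz ↦ ?_⟩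
  have hmantel : (4 * #G.edgeFinset : ℝ) ≤ Fintype.card V ^ 2 := by
    exact_mod_cast hG.four_mul_card_edgeFinset_le
  refine exists_ofReal_eq_of_quadratic_eq_zero (a := #G.edgeFinset) (b := Fintype.card V)
    one_ne_zero (by rw [discrim]; linarith) ?_
  rw [hpoly] at hz
  simp only [map_add, map_one, map_smul, aeval_X, aeval_X_pow, Complex.real_smul] at hz
  push_cast
  linear_combination hz
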